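/- Let G=(V,E) be a finite connected graph, x₀ ∈ ℝ^V, and for v ∈ V let f_v(x) = |x − x₀(v)|. Let 𝒰 be the set of all permutations of d, where d = (−1,…,−1,0,1,…,1) if |V| is odd and d = (−1,…,−1,1,…,1) if |V| is even, and λ₀ = max{‖u‖_* : u ∈ 𝒰}. Then for every λ > λ₀, the set of minimizers of Σ_v |x(v) − x₀(v)| + λ‖x‖_TV over ℝ^V equals { m·1_V : m ∈ median(x₀) }, where median(x₀) is the set of medians of the values (x₀(v))_{v∈V}. -/

import Mathlib

/-!
If `m` is a median of `x₀`, at most half of the values lie strictly above `m` and at most half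
strictly below, so the ties at `m` can be split to give `u ∈ 𝒰` with `u = 1` where `x₀ > m` and
`u = -1` where `x₀ < m`. Then `|m - x₀ v| ≤ |y v - x₀ v| + u v (y v - m)` for every `y`, and as
`∑ u = 0` the dual-norm inequality bounds `∑ u v y v` by `‖u‖_* ‖y‖_TV ≤ λ₀ ‖y‖_TV`. Hence
`∑ |m - x₀ v| ≤ ∑ |y v - x₀ v| + λ₀ ‖y‖_TV`: constant medians are minimizers, and a minimizer `x`
satisfies `λ ‖x‖_TV ≤ λ₀ ‖x‖_TV`, forcing `‖x‖_TV = 0`, so `x` is constant on the connected graph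
and its value is a median.
-/

open Finset

noncomputable section

/-- Discrete total variation. -/
def tvNorm {V : Type*} [Fintype V] (G : SimpleGraph V) [DecidableRel G.Adj]
    (x : V → ℝ) : ℝ :=
  (1 / 2) * ∑ v, ∑ w, if G.Adj v w then |x w - x v| else 0

/-- Dual norm of the TV norm on the zero-mean subspace. -/
def dualNorm {V : Type*} [Fintype V] (G : SimpleGraph V) [DecidableRel G.Adj]
    (u : V → ℝ) : ℝ :=
  sSup {r | ∃ x : V → ℝ, (∑ v, x v = 0) ∧ tvNorm G x ≤ 1 ∧ r = ∑ v, x v * u v}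

/-- The set `𝒰` of all permutations of the vector `d`: all coordinates `±1`
(balanced, so the sum is zero), with exactly one `0` coordinate when `|V|` is
odd. -/
def scriptU (V : Type*) [Fintype V] [DecidableEq V] : Set (V → ℝ) :=
  {u : V → ℝ | (∑ v, u v = 0) ∧ (∀ v, u v = 1 ∨ u v = -1 ∨ u v = 0) ∧
    (Finset.univ.filter fun v => u v = 0).card
      = (if Even (Fintype.card V) then 0 else 1)}

section TotalVariation

variable {V : Type*} [Fintype V] (G : SimpleGraph V) [DecidableRel G.Adj]

theorem tvNorm_nonneg (x : V → ℝ) : 0 ≤ tvNorm G x := by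
  unfold tvNorm
  positivity

theorem tvNorm_const (c : ℝ) : tvNorm G (fun _ => c) = 0 := by
  simp [tvNorm]

theorem tvNorm_mul_sub_const (a b : ℝ) (x : V → ℝ) :
    tvNorm G (fun v => a * (x v - b)) = |a| * tvNorm G x := by
  have hterm : ∀ v w, (if G.Adj v w then |a * (x w - b) - a * (x v - b)| else 0)
      = |a| * if G.Adj v w then |x w - x v| else 0 := fun v w => by
    rw [mul_ite, mul_zero, ← abs_mul]
    ring_nf
  simp only [tvNorm, hterm, ← mul_sum]
  ring

variable {G}

theorem SimpleGraph.Adj.abs_sub_le_tvNorm {a b : V} (h : G.Adj a b) (x : V → ℝ) :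
    |x b - x a| ≤ 2 * tvNorm G x := by
  have hterm : ∀ v w, 0 ≤ if G.Adj v w then |x w - x v| else 0 := fun v w => by positivity
  calc |x b - x a| = if G.Adj a b then |x b - x a| else 0 := (if_pos h).symm
    _ ≤ ∑ w, if G.Adj a w then |x w - x a| else 0 :=
        single_le_sum (fun w _ => hterm a w) (mem_univ b)
    _ ≤ ∑ v, ∑ w, if G.Adj v w then |x w - x v| else 0 :=
        single_le_sum (f := fun v => ∑ w, if G.Adj v w then |x w - x v| else 0)
          (fun v _ => sum_nonneg fun w _ => hterm v w) (mem_univ a)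
    _ = 2 * tvNorm G x := by rw [tvNorm]; ring

theorem SimpleGraph.Walk.abs_sub_le_tvNorm {v w : V} (p : G.Walk v w) (x : V → ℝ) :
    |x w - x v| ≤ 2 * p.length * tvNorm G x := by
  induction p with
  | nil => simp
  | @cons a b c h q ih =>
    have htri := abs_sub_le (x c) (x b) (x a)
    have hstep := h.abs_sub_le_tvNorm x
    rw [SimpleGraph.Walk.length_cons]
    push_cast
    linarith

variable [DecidableEq V]

theorem SimpleGraph.Connected.abs_sub_le_tvNorm (hG : G.Connected) (x : V → ℝ) (v w : V) :
    |x w - x v| ≤ 2 * Fintype.card V * tvNorm G x := by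
  obtain ⟨p⟩ := hG v w
  calc |x w - x v| ≤ 2 * (p.toPath : G.Walk v w).length * tvNorm G x :=
        (p.toPath : G.Walk v w).abs_sub_le_tvNorm x
    _ ≤ 2 * Fintype.card V * tvNorm G x := by
        gcongr
        · exact tvNorm_nonneg G x
        · exact p.toPath.2.length_lt.le

theorem SimpleGraph.Connected.eq_of_tvNorm_eq_zero (hG : G.Connected) {x : V → ℝ}
    (hx : tvNorm G x = 0) (v w : V) : x v = x w := by
  have := hG.abs_sub_le_tvNorm x w v
  rwa [hx, mul_zero, abs_nonpos_iff, sub_eq_zero] at this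

theorem SimpleGraph.Connected.abs_le_tvNorm_of_sum_eq_zero (hG : G.Connected) {x : V → ℝ}
    (hx : ∑ v, x v = 0) (v : V) : |x v| ≤ 2 * Fintype.card V * tvNorm G x := by
  have hV : (univ : Finset V).Nonempty := ⟨v, mem_univ v⟩
  rcases le_total 0 (x v) with hv | hv
  · obtain ⟨w, -, hw⟩ := exists_le_of_sum_le hV (f := x) (g := fun _ => 0) (by simp [hx])
    have := hG.abs_sub_le_tvNorm x w v
    rw [abs_of_nonneg hv]
    linarith [le_abs_self (x v - x w)]
  · obtain ⟨w, -, hw⟩ := exists_le_of_sum_le hV (f := fun _ => 0) (g := x) (by simp [hx])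
    have := hG.abs_sub_le_tvNorm x v w
    rw [abs_of_nonpos hv]
    linarith [le_abs_self (x w - x v)]

end TotalVariation

section DualNorm

variable {V : Type*} [Fintype V] [DecidableEq V] {G : SimpleGraph V} [DecidableRel G.Adj]

theorem SimpleGraph.Connected.sum_mul_le_dualNorm (hG : G.Connected) (u : V → ℝ) {x : V → ℝ}
    (hx₀ : ∑ v, x v = 0) (hx₁ : tvNorm G x ≤ 1) : ∑ v, x v * u v ≤ dualNorm G u := by
  refine le_csSup ⟨∑ v, 2 * Fintype.card V * |u v|, ?_⟩ ⟨x, hx₀, hx₁, rfl⟩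
  rintro r ⟨z, hz₀, hz₁, rfl⟩
  refine sum_le_sum fun v _ => ?_
  have := hG.abs_le_tvNorm_of_sum_eq_zero hz₀ v
  calc z v * u v ≤ |z v| * |u v| := by rw [← abs_mul]; exact le_abs_self _
    _ ≤ 2 * Fintype.card V * |u v| := by gcongr; nlinarith

theorem SimpleGraph.Connected.sum_mul_le_dualNorm_mul_tvNorm (hG : G.Connected) {u : V → ℝ}
    (hu : ∑ v, u v = 0) (y : V → ℝ) : ∑ v, y v * u v ≤ dualNorm G u * tvNorm G y := by
  obtain ⟨v₀⟩ := hG.nonempty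
  rcases (tvNorm_nonneg G y).eq_or_lt with hy | hy
  · have hconst : ∀ v, y v = y v₀ := fun v => hG.eq_of_tvNorm_eq_zero hy.symm v v₀
    simp [hconst, ← mul_sum, hu, ← hy]
  set t := tvNorm G y
  set c := (∑ v, y v) / Fintype.card V
  have hmean : ∑ v, t⁻¹ * (y v - c) = 0 := by
    rw [← mul_sum, sum_sub_distrib, sum_const, card_univ, nsmul_eq_mul,
      mul_div_cancel₀ _ (by exact_mod_cast (Fintype.card_pos_iff.mpr ⟨v₀⟩).ne'), sub_self, mul_zero]
  have htv : tvNorm G (fun v => t⁻¹ * (y v - c)) ≤ 1 := by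
    rw [tvNorm_mul_sub_const, abs_of_pos (inv_pos.mpr hy), inv_mul_cancel₀ hy.ne']
  have hdual := hG.sum_mul_le_dualNorm u hmean htv
  have hcentre : ∑ v, t⁻¹ * (y v - c) * u v = t⁻¹ * ∑ v, y v * u v := by
    simp only [mul_assoc, ← mul_sum, sub_mul, sum_sub_distrib, hu, mul_zero, sub_zero]
  rw [hcentre, inv_mul_le_iff₀ hy] at hdual
  linarith

end DualNorm

section Median

variable {V : Type*} [Fintype V]

/-- The minimizers of `∑ |m - x₀ v|` are exactly the paper's `median(x₀)`. -/
def IsMedian (x₀ : V → ℝ) (m : ℝ) : Prop :=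
  ∀ y : ℝ, ∑ v, |m - x₀ v| ≤ ∑ v, |y - x₀ v|

theorem exists_isMedian [Nonempty V] (x₀ : V → ℝ) : ∃ m, IsMedian x₀ m := by
  obtain ⟨v₀⟩ := ‹Nonempty V›
  refine Continuous.exists_forall_le (by fun_prop) ?_
  refine Filter.tendsto_atTop_mono (fun y => ?_)
    (Filter.tendsto_atTop_add_const_right _ (-|x₀ v₀|) tendsto_norm_cocompact_atTop)
  calc ‖y‖ + -|x₀ v₀| ≤ |y - x₀ v₀| := by
        rw [Real.norm_eq_abs]; linarith [abs_sub_abs_le_abs_sub y (x₀ v₀)]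
    _ ≤ ∑ v, |y - x₀ v| :=
        single_le_sum (f := fun v => |y - x₀ v|) (fun v _ => abs_nonneg _) (mem_univ v₀)

theorem IsMedian.neg {x₀ : V → ℝ} {m : ℝ} (hm : IsMedian x₀ m) : IsMedian (-x₀) (-m) := by
  have hneg : ∀ a b : ℝ, |-a - -b| = |a - b| := fun a b => by rw [neg_sub_neg, abs_sub_comm]
  intro y
  simp only [Pi.neg_apply, hneg]
  refine (hm (-y)).trans_eq (sum_congr rfl fun v _ => ?_)
  rw [← hneg (-y), neg_neg]

variable [DecidableEq V]

theorem IsMedian.two_mul_card_lt_le {x₀ : V → ℝ} {m : ℝ} (hm : IsMedian x₀ m) :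
    2 * #{v | m < x₀ v} ≤ Fintype.card V := by
  set Q : Finset V := {v | m < x₀ v}
  by_contra! hQ
  have hQne : Q.Nonempty := card_pos.mp (by omega)
  set ε := Q.inf' hQne (fun v => x₀ v - m)
  have hε : 0 < ε := (lt_inf'_iff hQne).mpr fun v hv => sub_pos.mpr (mem_filter.mp hv).2
  -- shifting `m` right by `ε`, the gap to the nearest value above `m`, changes the sum by
  -- `ε (|V| - 2 #Q) < 0`
  have hshift : ∀ v, |m + ε - x₀ v| = |m - x₀ v| + ε - 2 * ε * if v ∈ Q then 1 else 0 := by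
    intro v
    by_cases hv : v ∈ Q
    · have : ε ≤ x₀ v - m := inf'_le _ hv
      rw [if_pos hv, abs_of_nonpos (by linarith), abs_of_nonpos (by linarith)]
      ring
    · have : x₀ v ≤ m := not_lt.mp fun h => hv (mem_filter.mpr ⟨mem_univ v, h⟩)
      rw [if_neg hv, abs_of_nonneg (by linarith), abs_of_nonneg (by linarith)]
      ring
  have := hm (m + ε)
  simp only [hshift, sum_sub_distrib, sum_add_distrib, ← mul_sum, sum_boole, sum_const,
    card_univ, nsmul_eq_mul, filter_mem_eq_inter, univ_inter] at this
  have hQ' : (Fintype.card V : ℝ) < 2 * #Q := by exact_mod_cast hQ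
  nlinarith

theorem IsMedian.two_mul_card_gt_le {x₀ : V → ℝ} {m : ℝ} (hm : IsMedian x₀ m) :
    2 * #{v | x₀ v < m} ≤ Fintype.card V := by
  simpa only [Pi.neg_apply, neg_lt_neg_iff] using hm.neg.two_mul_card_lt_le

end Median

section SignVector

variable {V : Type*} [Fintype V] [DecidableEq V]

theorem exists_disjoint_supersets_card_eq_half {P Q : Finset V} (hPQ : Disjoint P Q)
    (hP : 2 * #P ≤ Fintype.card V) (hQ : 2 * #Q ≤ Fintype.card V) :
    ∃ S T : Finset V, P ⊆ S ∧ Q ⊆ T ∧ Disjoint S T ∧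
      #S = Fintype.card V / 2 ∧ #T = Fintype.card V / 2 := by
  set R := (P ∪ Q)ᶜ
  have hR : #R = Fintype.card V - #P - #Q := by
    rw [card_compl, card_union_of_disjoint hPQ]
    omega
  obtain ⟨A, hAR, hA⟩ := exists_subset_card_eq (s := R) (n := Fintype.card V / 2 - #P) (by omega)
  obtain ⟨B, hBR, hB⟩ := exists_subset_card_eq (s := R \ A) (n := Fintype.card V / 2 - #Q)
    (by rw [card_sdiff_of_subset hAR]; omega)
  have hR_mem : ∀ v ∈ R, v ∉ P ∧ v ∉ Q := fun v hv => by simpa [R, not_or] using hv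
  have hPA : Disjoint P A := disjoint_right.mpr fun v hv => (hR_mem v (hAR hv)).1
  have hQB : Disjoint Q B := disjoint_right.mpr fun v hv => (hR_mem v (sdiff_subset (hBR hv))).2
  refine ⟨P ∪ A, Q ∪ B, subset_union_left, subset_union_left, ?_, ?_, ?_⟩
  · rw [disjoint_union_left, disjoint_union_right, disjoint_union_right]
    refine ⟨⟨hPQ, disjoint_right.mpr fun v hv => (hR_mem v (sdiff_subset (hBR hv))).1⟩,
      disjoint_left.mpr fun v hv => (hR_mem v (hAR hv)).2,
      disjoint_right.mpr fun v hv => (mem_sdiff.mp (hBR hv)).2⟩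
  · rw [card_union_of_disjoint hPA]
    omega
  · rw [card_union_of_disjoint hQB]
    omega

theorem indicator_sub_indicator_mem_scriptU {S T : Finset V} (hST : Disjoint S T)
    (hS : #S = Fintype.card V / 2) (hT : #T = Fintype.card V / 2) :
    (fun v => (if v ∈ S then 1 else 0) - if v ∈ T then 1 else 0) ∈ scriptU V := by
  refine ⟨?_, fun v => ?_, ?_⟩
  · rw [sum_sub_distrib, sum_boole, sum_boole]
    simp [hS, hT]
  · by_cases hvS : v ∈ S
    · simp [hvS, disjoint_left.mp hST hvS]
    · by_cases hvT : v ∈ T <;> simp [hvS, hvT]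
  · have hzero : ({v | ((if v ∈ S then 1 else 0) - if v ∈ T then 1 else 0 : ℝ) = 0} : Finset V)
        = (S ∪ T)ᶜ := by
      ext v
      by_cases hvS : v ∈ S
      · simp [hvS, disjoint_left.mp hST hvS]
      · by_cases hvT : v ∈ T <;> simp [hvS, hvT]
    rw [hzero, card_compl, card_union_of_disjoint hST, hS, hT]
    split_ifs with h
    · rw [Nat.even_iff] at h; omega
    · rw [Nat.not_even_iff_odd, Nat.odd_iff] at h; omega

theorem abs_le_one_of_mem_scriptU {s : V → ℝ} (hs : s ∈ scriptU V) (v : V) : |s v| ≤ 1 := by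
  rcases hs.2.1 v with h | h | h <;> simp [h]

theorem IsMedian.exists_mem_scriptU {x₀ : V → ℝ} {m : ℝ} (hm : IsMedian x₀ m) :
    ∃ s ∈ scriptU V, ∀ v, s v * (x₀ v - m) = |x₀ v - m| := by
  obtain ⟨S, T, hPS, hQT, hST, hS, hT⟩ := exists_disjoint_supersets_card_eq_half
    (disjoint_filter.mpr fun v _ h₁ h₂ => lt_asymm h₁ h₂) hm.two_mul_card_lt_le
    hm.two_mul_card_gt_le
  refine ⟨_, indicator_sub_indicator_mem_scriptU hST hS hT, fun v => ?_⟩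
  rcases lt_trichotomy m (x₀ v) with h | h | h
  · have hvS : v ∈ S := hPS (by simpa using h)
    simp [hvS, disjoint_left.mp hST hvS, abs_of_pos (sub_pos.mpr h)]
  · simp [h]
  · have hvT : v ∈ T := hQT (by simpa using h)
    simp [hvT, disjoint_right.mp hST hvT, abs_of_neg (sub_neg.mpr h)]

end SignVector

theorem abs_sub_le_abs_sub_add_mul {a b s : ℝ} (hs : |s| ≤ 1) (h : s * (a - b) = |a - b|)
    (c : ℝ) : |b - a| ≤ |c - a| + s * (c - b) := by
  have : s * (a - c) ≤ |c - a| :=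
    calc s * (a - c) ≤ |s| * |a - c| := by rw [← abs_mul]; exact le_abs_self _
      _ ≤ |c - a| := by rw [abs_sub_comm a c]; exact mul_le_of_le_one_left (abs_nonneg _) hs
  rw [abs_sub_comm, ← h]
  linarith

theorem IsMedian.sum_abs_sub_le {V : Type*} [Fintype V] [DecidableEq V] {G : SimpleGraph V}
    [DecidableRel G.Adj] (hG : G.Connected) {lam₀ : ℝ}
    (hlam₀ : ∀ u ∈ scriptU V, dualNorm G u ≤ lam₀) {x₀ : V → ℝ} {m : ℝ} (hm : IsMedian x₀ m)
    (y : V → ℝ) : ∑ v, |m - x₀ v| ≤ ∑ v, |y v - x₀ v| + lam₀ * tvNorm G y := by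
  obtain ⟨s, hs, hsign⟩ := hm.exists_mem_scriptU
  calc ∑ v, |m - x₀ v| ≤ ∑ v, (|y v - x₀ v| + s v * (y v - m)) :=
        sum_le_sum fun v _ => abs_sub_le_abs_sub_add_mul (abs_le_one_of_mem_scriptU hs v)
          (hsign v) (y v)
    _ = ∑ v, |y v - x₀ v| + ∑ v, y v * s v := by
        have hexpand : ∀ v, s v * (y v - m) = y v * s v - m * s v := fun v => by ring
        simp only [sum_add_distrib, hexpand, sum_sub_distrib, ← mul_sum, hs.1, mul_zero,
          sub_zero]
    _ ≤ ∑ v, |y v - x₀ v| + dualNorm G s * tvNorm G y := by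
        gcongr
        exact hG.sum_mul_le_dualNorm_mul_tvNorm hs.1 y
    _ ≤ ∑ v, |y v - x₀ v| + lam₀ * tvNorm G y := by
        gcongr
        · exact tvNorm_nonneg G y
        · exact hlam₀ s hs

/-- Median consensus: for `λ > λ₀ = max {‖u‖_* : u ∈ 𝒰}`, the minimizers of
`∑_v |x(v) - x₀(v)| + λ‖x‖_TV` are exactly the constant vectors `m·1` with `m`
a median of `(x₀(v))_v`. -/
theorem median_consensus {V : Type*} [Fintype V] [DecidableEq V]
    (G : SimpleGraph V) [DecidableRel G.Adj] (hG : G.Connected)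
    (x₀ : V → ℝ) (lam lam₀ : ℝ)
    (hlam₀ : IsGreatest {r | ∃ u ∈ scriptU V, r = dualNorm G u} lam₀)
    (hlam : lam₀ < lam) :
    {x : V → ℝ | ∀ y : V → ℝ,
        (∑ v, |x v - x₀ v|) + lam * tvNorm G x
          ≤ (∑ v, |y v - x₀ v|) + lam * tvNorm G y}
      = {x : V → ℝ | ∃ m : ℝ,
          (∀ y : ℝ, (∑ v, |m - x₀ v|) ≤ ∑ v, |y - x₀ v|) ∧
          x = fun _ => m} := by
  have hbound : ∀ u ∈ scriptU V, dualNorm G u ≤ lam₀ := fun u hu => hlam₀.2 ⟨u, hu, rfl⟩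
  have hV : Nonempty V := hG.nonempty
  ext x
  constructor
  · intro hx
    obtain ⟨m, hm⟩ := exists_isMedian x₀
    have htv : tvNorm G x = 0 := by
      have hxm := hx fun _ => m
      rw [tvNorm_const, mul_zero, add_zero] at hxm
      have hmx := hm.sum_abs_sub_le hG hbound x
      nlinarith [tvNorm_nonneg G x]
    obtain ⟨v₀⟩ := hV
    have hconst : x = fun _ => x v₀ := funext fun v => hG.eq_of_tvNorm_eq_zero htv v v₀
    refine ⟨x v₀, fun y => ?_, hconst⟩
    rw [hconst] at hx
    simpa only [tvNorm_const, mul_zero, add_zero] using hx fun _ => y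
  · rintro ⟨m, hm : IsMedian x₀ m, rfl⟩ y
    rw [tvNorm_const, mul_zero, add_zero]
    linarith [hm.sum_abs_sub_le hG hbound y,
      mul_le_mul_of_nonneg_right hlam.le (tvNorm_nonneg G y)]
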